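/- Let S and A be finite types and consider a single Markov decision process on S and A with initial distribution ρ₀ and transition kernel T : S × A → PMF(S), together with two policies π₁, π₂ : S → PMF(A) satisfying D_TV(π₁(s), π₂(s)) ≤ ε_π for all s ∈ S. Let r : S × A → ℝ satisfy |r(s,a)| ≤ R for all s, a, let γ ∈ [0,1), and let G(π₁) and G(π₂) denote the discounted returns of π₁ and π₂ under T. Then |G(π₁) − G(π₂)| ≤ 2Rγ·ε_π/(1 − γ)² + 2R·ε_π/(1 − γ). -/

import Mathlib

open scoped BigOperators

/-- Total variation distance between two PMFs on a finite type. -/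
noncomputable def tv {X : Type*} [Fintype X] (p q : PMF X) : ℝ :=
  (1 / 2) * ∑ x, |(p x).toReal - (q x).toReal|

/-!
Write `d_t` and `e_t` for the total variation distances between the two state marginals and the
two state–action marginals at time `t`. Splitting `μ₁ π₁ - μ₂ π₂ = (μ₁ - μ₂) π₁ + μ₂ (π₁ - π₂)`
gives `e_t ≤ d_t + ε_π`, and pushing both marginals through the common kernel `T` cannot increase
their distance, so `d_{t+1} ≤ e_t`. Since `d_0 = 0`, this yields `e_t ≤ (t + 1) ε_π`. The expected
rewards at time `t` then differ by at most `2R (t + 1) ε_π`, and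
`∑ (t + 1) γ^t = γ / (1 - γ)^2 + 1 / (1 - γ)`.
-/

open Finset

namespace PMF

variable {X Y : Type*} [Fintype X]

theorem sum_toReal_eq_one (p : PMF X) : ∑ x, (p x).toReal = 1 := by
  have h := p.tsum_coe
  rw [tsum_fintype] at h
  rw [← ENNReal.toReal_sum fun x _ => p.apply_ne_top x, h, ENNReal.toReal_one]

theorem toReal_sum_mul (p : PMF X) (K : X → PMF Y) (y : Y) :
    (∑ x, p x * K x y).toReal = ∑ x, (p x).toReal * (K x y).toReal := by
  rw [ENNReal.toReal_sum fun x _ => ENNReal.mul_ne_top (p.apply_ne_top x) ((K x).apply_ne_top y)]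
  simp only [ENNReal.toReal_mul]

theorem abs_sum_toReal_mul_le (p : PMF X) {f : X → ℝ} {R : ℝ} (hf : ∀ x, |f x| ≤ R) :
    |∑ x, (p x).toReal * f x| ≤ R :=
  calc |∑ x, (p x).toReal * f x| ≤ ∑ x, (p x).toReal * R :=
        (abs_sum_le_sum_abs _ _).trans <| sum_le_sum fun x _ => by
          rw [abs_mul, abs_of_nonneg ENNReal.toReal_nonneg]
          exact mul_le_mul_of_nonneg_left (hf x) ENNReal.toReal_nonneg
    _ = R := by rw [← sum_mul, p.sum_toReal_eq_one, one_mul]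

end PMF

theorem abs_mul_sub_mul_le {a b c d : ℝ} (hb : 0 ≤ b) (hc : 0 ≤ c) :
    |a * c - b * d| ≤ |a - b| * c + b * |c - d| :=
  calc |a * c - b * d| = |(a - b) * c + b * (c - d)| := by ring_nf
    _ ≤ |(a - b) * c| + |b * (c - d)| := abs_add_le _ _
    _ = |a - b| * c + b * |c - d| := by rw [abs_mul, abs_mul, abs_of_nonneg hb, abs_of_nonneg hc]

section TotalVariation

variable {X Y : Type*} [Fintype X]

theorem abs_sum_toReal_mul_sub_le (p q : PMF X) {f : X → ℝ} {R : ℝ} (hf : ∀ x, |f x| ≤ R) :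
    |∑ x, (p x).toReal * f x - ∑ x, (q x).toReal * f x| ≤ 2 * R * tv p q :=
  calc |∑ x, (p x).toReal * f x - ∑ x, (q x).toReal * f x|
      = |∑ x, ((p x).toReal - (q x).toReal) * f x| := by
        simp only [sub_mul, sum_sub_distrib]
    _ ≤ ∑ x, |(p x).toReal - (q x).toReal| * R :=
        (abs_sum_le_sum_abs _ _).trans <| sum_le_sum fun x _ => by
          rw [abs_mul]
          exact mul_le_mul_of_nonneg_left (hf x) (abs_nonneg _)
    _ = 2 * R * tv p q := by rw [tv, ← sum_mul]; ring

theorem tv_le_tv_of_eq_sum_mul [Fintype Y] {p q : PMF X} {μ ν : PMF Y} (K : X → PMF Y)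
    (hμ : ∀ y, μ y = ∑ x, p x * K x y) (hν : ∀ y, ν y = ∑ x, q x * K x y) :
    tv μ ν ≤ tv p q := by
  unfold tv
  gcongr
  calc ∑ y, |(μ y).toReal - (ν y).toReal|
      = ∑ y, |∑ x, ((p x).toReal - (q x).toReal) * (K x y).toReal| := by
        simp only [hμ, hν, PMF.toReal_sum_mul, sub_mul, sum_sub_distrib]
    _ ≤ ∑ y, ∑ x, |(p x).toReal - (q x).toReal| * (K x y).toReal :=
        sum_le_sum fun y _ => (abs_sum_le_sum_abs _ _).trans_eq <| sum_congr rfl fun x _ => by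
          rw [abs_mul, abs_of_nonneg ENNReal.toReal_nonneg]
    _ = ∑ x, |(p x).toReal - (q x).toReal| := by
        rw [sum_comm]
        simp only [← mul_sum, PMF.sum_toReal_eq_one, mul_one]

theorem tv_le_tv_add_of_policy {S A : Type*} [Fintype S] [Fintype A] {μ ν : PMF S}
    {π₁ π₂ : S → PMF A} {p q : PMF (S × A)} {ε : ℝ}
    (hp : ∀ s a, p (s, a) = μ s * π₁ s a) (hq : ∀ s a, q (s, a) = ν s * π₂ s a)
    (hπ : ∀ s, tv (π₁ s) (π₂ s) ≤ ε) :
    tv p q ≤ tv μ ν + ε := by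
  have hrow : ∀ s, ∑ a, |(μ s).toReal * (π₁ s a).toReal - (ν s).toReal * (π₂ s a).toReal|
      ≤ |(μ s).toReal - (ν s).toReal| + (ν s).toReal * (2 * ε) := fun s =>
    calc ∑ a, |(μ s).toReal * (π₁ s a).toReal - (ν s).toReal * (π₂ s a).toReal|
        ≤ ∑ a, (|(μ s).toReal - (ν s).toReal| * (π₁ s a).toReal
            + (ν s).toReal * |(π₁ s a).toReal - (π₂ s a).toReal|) := sum_le_sum fun a _ =>
          abs_mul_sub_mul_le ENNReal.toReal_nonneg ENNReal.toReal_nonneg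
      _ = |(μ s).toReal - (ν s).toReal| + (ν s).toReal * (2 * tv (π₁ s) (π₂ s)) := by
          rw [sum_add_distrib, ← mul_sum, ← mul_sum, PMF.sum_toReal_eq_one, tv]
          ring
      _ ≤ _ := by gcongr; exact hπ s
  have hsum := sum_le_sum fun s (_ : s ∈ univ) => hrow s
  rw [sum_add_distrib, ← sum_mul, PMF.sum_toReal_eq_one] at hsum
  unfold tv
  rw [Fintype.sum_prod_type]
  simp only [hp, hq, ENNReal.toReal_mul]
  linarith

end TotalVariation

theorem summable_geometric_mul_of_abs_le {γ R : ℝ} (hγ0 : 0 ≤ γ) (hγ1 : γ < 1) {f : ℕ → ℝ}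
    (hf : ∀ t, |f t| ≤ R) : Summable fun t => γ ^ t * f t :=
  .of_norm_bounded ((summable_geometric_of_lt_one hγ0 hγ1).mul_right R) fun t => by
    rw [Real.norm_eq_abs, abs_mul, abs_pow, abs_of_nonneg hγ0]
    exact mul_le_mul_of_nonneg_left (hf t) (pow_nonneg hγ0 t)

theorem abs_tsum_geometric_mul_sub_le {γ C : ℝ} (hγ0 : 0 ≤ γ) (hγ1 : γ < 1) {f g : ℕ → ℝ}
    (hf : Summable fun t => γ ^ t * f t) (hg : Summable fun t => γ ^ t * g t)
    (hfg : ∀ t : ℕ, |f t - g t| ≤ C * (t + 1)) :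
    |∑' t, γ ^ t * f t - ∑' t, γ ^ t * g t| ≤ C * γ / (1 - γ) ^ 2 + C / (1 - γ) := by
  have hγ : ‖γ‖ < 1 := by rwa [Real.norm_eq_abs, abs_of_nonneg hγ0]
  have hbound := ((hasSum_coe_mul_geometric_of_norm_lt_one hγ).mul_left C).add
    ((hasSum_geometric_of_lt_one hγ0 hγ1).mul_left C)
  rw [← hf.tsum_sub hg, ← Real.norm_eq_abs]
  refine (tsum_of_norm_bounded hbound fun t => ?_).trans_eq (by ring)
  rw [Real.norm_eq_abs, ← mul_sub, abs_mul, abs_pow, abs_of_nonneg hγ0]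
  calc γ ^ t * |f t - g t| ≤ γ ^ t * (C * (t + 1)) := by gcongr; exact hfg t
    _ = C * (t * γ ^ t) + C * γ ^ t := by ring

/-- For a single MDP (kernel `T`, initial distribution `ρ₀`) and two
policies `π₁, π₂` with `D_TV(π₁(s), π₂(s)) ≤ ε_π` for all `s`, reward bounded by `R`
and discount `γ ∈ [0,1)`, the discounted returns satisfy
`|G(π₁) − G(π₂)| ≤ 2Rγ·ε_π/(1−γ)² + 2R·ε_π/(1−γ)`. -/
theorem return_gap_same_dynamics {S A : Type*} [Fintype S] [Fintype A]
    (ρ₀ : PMF S) (T : S × A → PMF S) (π₁ π₂ : S → PMF A) (επ : ℝ)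
    (hπ : ∀ s, tv (π₁ s) (π₂ s) ≤ επ)
    (μ₁ μ₂ : ℕ → PMF S)
    (hμ₁0 : μ₁ 0 = ρ₀) (hμ₂0 : μ₂ 0 = ρ₀)
    (hμ₁ : ∀ t s', μ₁ (t + 1) s' = ∑ s, ∑ a, μ₁ t s * π₁ s a * T (s, a) s')
    (hμ₂ : ∀ t s', μ₂ (t + 1) s' = ∑ s, ∑ a, μ₂ t s * π₂ s a * T (s, a) s')
    (p₁ p₂ : ℕ → PMF (S × A))
    (hp₁ : ∀ t s a, p₁ t (s, a) = μ₁ t s * π₁ s a)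
    (hp₂ : ∀ t s a, p₂ t (s, a) = μ₂ t s * π₂ s a)
    (r : S × A → ℝ) (R : ℝ) (hr : ∀ s a, |r (s, a)| ≤ R)
    (γ : ℝ) (hγ0 : 0 ≤ γ) (hγ1 : γ < 1)
    (G₁ G₂ : ℝ)
    (hG₁ : G₁ = ∑' t : ℕ, γ ^ t * ∑ sa : S × A, (p₁ t sa).toReal * r sa)
    (hG₂ : G₂ = ∑' t : ℕ, γ ^ t * ∑ sa : S × A, (p₂ t sa).toReal * r sa) :
    |G₁ - G₂| ≤ 2 * R * γ * επ / (1 - γ) ^ 2 + 2 * R * επ / (1 - γ) := by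
  have hr' : ∀ sa, |r sa| ≤ R := fun sa => hr sa.1 sa.2
  obtain ⟨s₀, -⟩ := ρ₀.support_nonempty
  obtain ⟨a₀, -⟩ := (π₁ s₀).support_nonempty
  have hR : 0 ≤ R := (abs_nonneg _).trans (hr s₀ a₀)
  have hstate : ∀ t, tv (μ₁ (t + 1)) (μ₂ (t + 1)) ≤ tv (p₁ t) (p₂ t) := fun t =>
    tv_le_tv_of_eq_sum_mul T
      (fun s' => by rw [hμ₁, Fintype.sum_prod_type]; simp only [hp₁])
      (fun s' => by rw [hμ₂, Fintype.sum_prod_type]; simp only [hp₂])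
  have hpolicy : ∀ t, tv (p₁ t) (p₂ t) ≤ tv (μ₁ t) (μ₂ t) + επ := fun t =>
    tv_le_tv_add_of_policy (hp₁ t) (hp₂ t) hπ
  have hμtv : ∀ t : ℕ, tv (μ₁ t) (μ₂ t) ≤ t * επ := by
    intro t
    induction t with
    | zero => simp [hμ₁0, hμ₂0, tv]
    | succ t ih => push_cast; linarith [hstate t, hpolicy t]
  have hgap : ∀ t : ℕ, |∑ sa, (p₁ t sa).toReal * r sa - ∑ sa, (p₂ t sa).toReal * r sa|
      ≤ 2 * R * επ * (t + 1) := fun t =>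
    calc _ ≤ 2 * R * tv (p₁ t) (p₂ t) := abs_sum_toReal_mul_sub_le _ _ hr'
      _ ≤ 2 * R * ((t + 1) * επ) := by gcongr; linarith [hpolicy t, hμtv t]
      _ = _ := by ring
  rw [hG₁, hG₂]
  calc _ ≤ 2 * R * επ * γ / (1 - γ) ^ 2 + 2 * R * επ / (1 - γ) :=
        abs_tsum_geometric_mul_sub_le hγ0 hγ1
          (summable_geometric_mul_of_abs_le hγ0 hγ1 fun t => (p₁ t).abs_sum_toReal_mul_le hr')
          (summable_geometric_mul_of_abs_le hγ0 hγ1 fun t => (p₂ t).abs_sum_toReal_mul_le hr') hgap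
    _ = _ := by ring
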